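/- arXiv:2004.13196 — 2 statements merged into one kernel-verified Lean document; each statement's English description precedes it below -/
import Mathlib

section
/- The k-th moment of distance on L(2;1) = ℝP³ satisfies the asymptotic I(2,k) ~ (2/k) · (π/2)^k as k → ∞; that is, the ratio I(2,k) / ( (2/k) · (π/2)^k ) tends to 1 as k → ∞. -/
open MeasureTheory

/-- The `k`-th moment of distance on the homogeneous lens space `L(n;1)`,
expressed as an explicit integral over a fundamental domain in join coordinates. -/
noncomputable def momentI (n k : ℕ) : ℝ :=
  ((n : ℝ) ^ 2 / (2 * Real.pi ^ 2)) *
    ∫ θ₂ in (-(Real.pi / n))..(Real.pi / n),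
      ∫ θ₁ in (-(Real.pi / n))..(Real.pi / n),
        ∫ η in (0 : ℝ)..(Real.pi / 2),
          (Real.arccos (Real.cos θ₁ * Real.cos η)) ^ k * Real.cos η * Real.sin η

/-!
Substituting `u = cos η` and then `u = cos s / cos θ` turns the inner integrals into
`(cos θ)⁻² ∫_θ^{π/2} s^k cos s sin s ds`; integrating by parts in `θ` against `tan θ` then gives
`I(2,k) = (4/π) ∫₀^{π/2} s^k sin² s ds`: the distance to the base point of `ℝP³` has density
proportional to `sin² s`. Jordan's inequality `2s/π ≤ sin s ≤ 1` squeezes this integral between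
`(π/2)^{k+1}/(k+3)` and `(π/2)^{k+1}/(k+1)`, and both bounds are `~ (π/2)^{k+1}/k`.
-/

open Real intervalIntegral Set

theorem integral_comp_cos_mul_sin {g : ℝ → ℝ} (hg : Continuous g) :
    ∫ η in (0 : ℝ)..π / 2, g (cos η) * sin η = ∫ u in (0 : ℝ)..1, g u := by
  have h := integral_comp_mul_deriv (a := 0) (b := π / 2) (f := cos) (f' := fun x => -sin x)
    (fun x _ => hasDerivAt_cos x) continuous_sin.neg.continuousOn hg
  simpa only [Function.comp_def, mul_neg, intervalIntegral.integral_neg, cos_zero,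
    cos_pi_div_two, integral_symm 0 1, neg_inj] using h

theorem integral_comp_arccos_mul {f : ℝ → ℝ} (hf : Continuous f) {θ : ℝ} (h₀ : 0 ≤ θ)
    (hθ : θ < π / 2) :
    ∫ u in (0 : ℝ)..1, f (arccos (cos θ * u)) * u
      = (∫ s in θ..π / 2, f s * cos s * sin s) / cos θ ^ 2 := by
  have hc : 0 < cos θ := cos_pos_of_mem_Ioo ⟨by linarith [pi_pos], hθ⟩
  have h := integral_comp_mul_deriv (a := θ) (b := π / 2) (f := fun s => cos s / cos θ)
    (f' := fun s => -sin s / cos θ) (g := fun u => f (arccos (cos θ * u)) * u)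
    (fun x _ => (hasDerivAt_cos x).div_const _) (continuous_sin.neg.div_const _).continuousOn
    (by fun_prop)
  simp only [cos_pi_div_two, zero_div, div_self hc.ne', integral_symm 0 1] at h
  rw [← neg_eq_iff_eq_neg.mpr h, ← intervalIntegral.integral_div, ← intervalIntegral.integral_neg]
  refine integral_congr fun s hs => ?_
  rw [uIcc_of_le hθ.le] at hs
  have hs' : arccos (cos s) = s := arccos_cos (h₀.trans hs.1) (by linarith [hs.2, pi_pos])
  simp only [Function.comp_apply, mul_div_cancel₀ _ hc.ne', hs']
  field_simp

theorem integral_integral_comp_arccos_mul {f : ℝ → ℝ} (hf : Continuous f) :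
    ∫ θ in (0 : ℝ)..π / 2, ∫ u in (0 : ℝ)..1, f (arccos (cos θ * u)) * u
      = ∫ s in (0 : ℝ)..π / 2, f s * sin s ^ 2 := by
  set A : ℝ → ℝ := fun θ => ∫ u in (0 : ℝ)..1, f (arccos (cos θ * u)) * u
  set F : ℝ → ℝ := fun θ => ∫ s in θ..π / 2, f s * cos s * sin s
  have hA : Continuous A := by fun_prop
  -- `sin θ cos θ A θ = tan θ F θ` on `(0, π/2)`, and it vanishes at both ends of `[0, π/2]`,
  -- so the singularity of `tan` at `π/2` never enters.
  have hderiv : ∀ θ ∈ Ioo 0 (π / 2),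
      HasDerivAt (fun x => sin x * cos x * A x) (A θ - f θ * sin θ ^ 2) θ := by
    intro θ hθ
    have hc : cos θ ≠ 0 := (cos_pos_of_mem_Ioo ⟨by linarith [pi_pos, hθ.1], hθ.2⟩).ne'
    have htanF : HasDerivAt (fun x => tan x * F x) (A θ - f θ * sin θ ^ 2) θ := by
      have hF := integral_hasDerivAt_left (b := π / 2) (f := fun s => f s * cos s * sin s)
        (a := θ) ((by fun_prop : Continuous _).intervalIntegrable _ _)
        ((by fun_prop : Continuous _).stronglyMeasurableAtFilter _ _)
        (by fun_prop : Continuous _).continuousAt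
      refine ((hasDerivAt_tan hc).mul hF).congr_deriv ?_
      simp only [A, integral_comp_arccos_mul hf hθ.1.le hθ.2, tan_eq_sin_div_cos]
      field_simp
      ring
    refine htanF.congr_of_eventuallyEq (Filter.eventually_of_mem (isOpen_Ioo.mem_nhds hθ) ?_)
    intro x hx
    have hc : cos x ≠ 0 := (cos_pos_of_mem_Ioo ⟨by linarith [pi_pos, hx.1], hx.2⟩).ne'
    simp only [A, F, integral_comp_arccos_mul hf hx.1.le hx.2, tan_eq_sin_div_cos]
    field_simp
  have hFTC := integral_eq_sub_of_hasDerivAt_of_le (by positivity) (by fun_prop) hderiv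
    ((by fun_prop : Continuous fun θ => A θ - f θ * sin θ ^ 2).intervalIntegrable _ _)
  rw [integral_sub (hA.intervalIntegrable _ _)
    ((by fun_prop : Continuous fun θ => f θ * sin θ ^ 2).intervalIntegrable _ _)] at hFTC
  simp only [cos_pi_div_two, sin_zero, mul_zero, zero_mul, sub_zero] at hFTC
  exact sub_eq_zero.mp hFTC

theorem integral_neg_to_self_of_even {f : ℝ → ℝ} (hf : ∀ x, f (-x) = f x) {a : ℝ}
    (hint : IntervalIntegrable f volume 0 a) :
    ∫ x in -a..a, f x = 2 * ∫ x in (0 : ℝ)..a, f x := by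
  have hint' : IntervalIntegrable f volume (-a) 0 := by
    simpa only [neg_zero, hf] using ((IntervalIntegrable.iff_comp_neg (f := f)).mp hint).symm
  have hneg : ∫ x in -a..0, f x = ∫ x in (0 : ℝ)..a, f x := by
    simpa only [neg_zero, hf] using (integral_comp_neg (a := 0) (b := a) f).symm
  rw [← integral_add_adjacent_intervals hint' hint, hneg, two_mul]

theorem momentI_two_eq (k : ℕ) :
    momentI 2 k = 4 / π * ∫ s in (0 : ℝ)..π / 2, s ^ k * sin s ^ 2 := by
  have hinner : ∀ θ : ℝ, ∫ η in (0 : ℝ)..π / 2, arccos (cos θ * cos η) ^ k * cos η * sin η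
      = ∫ u in (0 : ℝ)..1, arccos (cos θ * u) ^ k * u := fun θ =>
    integral_comp_cos_mul_sin (g := fun u => arccos (cos θ * u) ^ k * u) (by fun_prop)
  have hcast : π / ((2 : ℕ) : ℝ) = π / 2 := by norm_num
  rw [momentI, hcast]
  simp_rw [hinner]
  have hint : IntervalIntegrable (fun θ => ∫ u in (0 : ℝ)..1, arccos (cos θ * u) ^ k * u)
      volume 0 (π / 2) :=
    Continuous.intervalIntegrable (by fun_prop) _ _
  rw [intervalIntegral.integral_const,
    integral_neg_to_self_of_even (fun θ => by simp only [cos_neg]) hint,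
    integral_integral_comp_arccos_mul (f := (· ^ k)) (continuous_pow k), smul_eq_mul]
  field_simp
  ring

theorem integral_pow_mul_sin_sq_le (k : ℕ) :
    ∫ s in (0 : ℝ)..π / 2, s ^ k * sin s ^ 2 ≤ (π / 2) ^ (k + 1) / (k + 1) := by
  calc ∫ s in (0 : ℝ)..π / 2, s ^ k * sin s ^ 2 ≤ ∫ s in (0 : ℝ)..π / 2, s ^ k := by
        refine integral_mono_on (by positivity)
          (Continuous.intervalIntegrable (by fun_prop) _ _)
          (Continuous.intervalIntegrable (by fun_prop) _ _) fun s hs => ?_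
        exact mul_le_of_le_one_right (pow_nonneg hs.1 k) (sin_sq_le_one s)
    _ = (π / 2) ^ (k + 1) / (k + 1) := by simp [integral_pow]

theorem le_integral_pow_mul_sin_sq (k : ℕ) :
    (π / 2) ^ (k + 1) / (k + 3) ≤ ∫ s in (0 : ℝ)..π / 2, s ^ k * sin s ^ 2 := by
  calc (π / 2) ^ (k + 1) / (k + 3) = ∫ s in (0 : ℝ)..π / 2, (2 / π) ^ 2 * s ^ (k + 2) := by
        rw [intervalIntegral.integral_const_mul, integral_pow]
        push_cast
        field_simp
        ring
    _ = ∫ s in (0 : ℝ)..π / 2, s ^ k * (2 / π * s) ^ 2 := integral_congr fun s _ => by ring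
    _ ≤ ∫ s in (0 : ℝ)..π / 2, s ^ k * sin s ^ 2 := by
        refine integral_mono_on (by positivity)
          (Continuous.intervalIntegrable (by fun_prop) _ _)
          (Continuous.intervalIntegrable (by fun_prop) _ _) fun s hs => ?_
        exact mul_le_mul_of_nonneg_left
          (pow_le_pow_left₀ (mul_nonneg (by positivity) hs.1) (mul_le_sin hs.1 hs.2) 2)
          (pow_nonneg hs.1 k)

theorem momentI_two_div_eq (k : ℕ) :
    momentI 2 k / (2 / (k : ℝ) * (π / 2) ^ k)
      = k * (∫ s in (0 : ℝ)..π / 2, s ^ k * sin s ^ 2) / (π / 2) ^ (k + 1) := by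
  rcases eq_or_ne k 0 with rfl | hk
  · simp
  rw [momentI_two_eq]
  field_simp
  ring

theorem moment_asymptotics_RP3 :
    Filter.Tendsto
      (fun k : ℕ => momentI 2 k / ((2 / (k : ℝ)) * (Real.pi / 2) ^ k))
      Filter.atTop (nhds 1) := by
  simp_rw [momentI_two_div_eq]
  refine tendsto_of_tendsto_of_tendsto_of_le_of_le (tendsto_natCast_div_add_atTop (3 : ℝ))
    (tendsto_natCast_div_add_atTop (1 : ℝ)) (fun k => ?_) (fun k => ?_)
  · rw [le_div_iff₀ (by positivity)]
    calc (k : ℝ) / (k + 3) * (π / 2) ^ (k + 1) = k * ((π / 2) ^ (k + 1) / (k + 3)) := by ring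
      _ ≤ _ := by gcongr; exact le_integral_pow_mul_sin_sq k
  · rw [div_le_iff₀ (by positivity)]
    calc _ ≤ (k : ℝ) * ((π / 2) ^ (k + 1) / (k + 1)) := by
          gcongr; exact integral_pow_mul_sin_sq_le k
      _ = k / (k + 1) * (π / 2) ^ (k + 1) := by ring
end

section
/- For every integer n ≥ 3 and every real t ≠ 0, the exponential generating function of the moments of distance equals the moment-generating function: ∑_{k=0}^∞ I(n,k) · t^k / k! = (2n/(π(4+t²))) · ( 2(e^{tπ/n} − 1)/t + tan(π/n) · (e^{tπ/2} − e^{tπ/n}) ), and in particular this series converges. -/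
/-!
Substituting `r = arccos (cos θ * cos η)` for `η` turns the inner integral into
`(∫ r in |θ|..π/2, g r * (sin r * cos r)) / cos θ ^ 2`, for any function `g` of the distance.
The outer integrand is even in `θ`, and integrating by parts against `tan θ` reduces the average
of `g` over `L(n;1)` to
`2n/π * ((∫ θ in 0..π/n, g θ * sin θ ^ 2) + tan (π/n) * ∫ r in π/n..π/2, g r * (sin r * cos r))`.
For `g r = r ^ k` this is `I(n,k)`. Summing against `t ^ k / k!` commutes with these integrals by
dominated convergence and replaces `r ^ k` by `exp (t * r)`, whose integrals against `sin r ^ 2`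
and `sin r * cos r` are elementary.
-/

open MeasureTheory

open Real intervalIntegral Set

theorem integral_comp_arccos_mul_cos (G : ℝ → ℝ) {c : ℝ} (hc₀ : 0 < c) (hc₁ : c ≤ 1) :
    ∫ η in (0:ℝ)..π / 2, G (arccos (c * cos η)) * cos η * sin η
      = (∫ r in arccos c..π / 2, G r * (sin r * cos r)) / c ^ 2 := by
  have hπ : (0:ℝ) ≤ π / 2 := by positivity
  have harg : ∀ η ∈ Ioc 0 (π / 2), 0 ≤ c * cos η ∧ c * cos η < 1 := by
    intro η ⟨h0, h1⟩
    have hcos₀ : 0 ≤ cos η := cos_nonneg_of_mem_Icc ⟨by linarith, h1⟩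
    have hcos₁ : cos η < 1 := by
      simpa using cos_lt_cos_of_nonneg_of_le_pi le_rfl (by linarith [pi_pos]) h0
    exact ⟨by positivity, by nlinarith⟩
  have hderiv : ∀ η ∈ Ioo (min 0 (π / 2)) (max 0 (π / 2)),
      HasDerivAt (fun η => arccos (c * cos η)) (c * sin η / √(1 - (c * cos η) ^ 2)) η := by
    intro η hη
    rw [min_eq_left hπ, max_eq_right hπ] at hη
    obtain ⟨h0, h1⟩ := harg η (Ioo_subset_Ioc_self hη)
    have h := (hasDerivAt_arccos (by linarith) h1.ne).comp η ((hasDerivAt_cos η).const_mul c)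
    exact h.congr_deriv (by ring)
  have hnonneg : ∀ η ∈ Ioo (min 0 (π / 2)) (max 0 (π / 2)),
      0 ≤ c * sin η / √(1 - (c * cos η) ^ 2) := by
    intro η hη
    rw [min_eq_left hπ, max_eq_right hπ] at hη
    have := sin_nonneg_of_nonneg_of_le_pi hη.1.le (by linarith [hη.2, pi_pos])
    positivity
  have hsubst := integral_comp_mul_deriv_of_deriv_nonneg
    (g := fun r => G r * (sin r * cos r) / c ^ 2) (by fun_prop) hderiv hnonneg
  simp only [cos_zero, mul_one, cos_pi_div_two, mul_zero, arccos_zero,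
    intervalIntegral.integral_div] at hsubst
  rw [← hsubst]
  -- `Ι 0 (π / 2)` omits `η = 0`, where the square root below vanishes if `c = 1`
  refine integral_congr_ae (Filter.Eventually.of_forall fun η hη => ?_)
  rw [uIoc_of_le hπ] at hη
  obtain ⟨h0, h1⟩ := harg η hη
  have hroot : √(1 - c ^ 2 * cos η ^ 2) ≠ 0 := (Real.sqrt_pos.mpr (by nlinarith)).ne'
  simp only [Function.comp, sin_arccos, cos_arccos (by linarith) h1.le]
  field_simp

theorem integral_comp_arccos_cos_mul_cos (G : ℝ → ℝ) {θ : ℝ} (hθ : |θ| < π / 2) :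
    ∫ η in (0:ℝ)..π / 2, G (arccos (cos θ * cos η)) * cos η * sin η
      = (∫ r in |θ|..π / 2, G r * (sin r * cos r)) / cos θ ^ 2 := by
  have harccos : arccos (cos θ) = |θ| := by
    rw [← cos_abs, arccos_cos (abs_nonneg θ) (by linarith [pi_pos])]
  rw [integral_comp_arccos_mul_cos G (cos_pos_of_mem_Ioo (abs_lt.mp hθ)) (cos_le_one θ), harccos]

theorem Function.Even.intervalIntegral_neg_eq_two_mul {f : ℝ → ℝ} (hf : Function.Even f) {a : ℝ}
    (hint : IntervalIntegrable f volume (-a) a) :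
    ∫ x in -a..a, f x = 2 * ∫ x in (0:ℝ)..a, f x := by
  have h0 : (0:ℝ) ∈ uIcc (-a) a := by
    rcases le_total 0 a with h | h <;> simp [h]
  have hleft : ∫ x in -a..0, f x = ∫ x in (0:ℝ)..a, f x := by
    simpa [hf _] using (integral_comp_neg (a := 0) (b := a) f).symm
  rw [← integral_add_adjacent_intervals (hint.mono_set (uIcc_subset_uIcc_left h0))
    (hint.mono_set (uIcc_subset_uIcc_right h0)), hleft, two_mul]

theorem Continuous.integral_hasDerivAt_left {f : ℝ → ℝ} (hf : Continuous f) (a b : ℝ) :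
    HasDerivAt (fun u => ∫ x in u..b, f x) (-f a) a :=
  intervalIntegral.integral_hasDerivAt_left (hf.intervalIntegrable _ _)
    (hf.stronglyMeasurableAtFilter _ _) hf.continuousAt

theorem integral_primitive_div_cos_sq {G : ℝ → ℝ} (hG : Continuous G) {φ : ℝ} (hφ₀ : 0 ≤ φ)
    (hφ : φ < π / 2) :
    ∫ θ in (0:ℝ)..φ, (∫ r in θ..π / 2, G r * (sin r * cos r)) / cos θ ^ 2
      = (∫ θ in (0:ℝ)..φ, G θ * sin θ ^ 2) + tan φ * ∫ r in φ..π / 2, G r * (sin r * cos r) := by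
  have hcont : Continuous fun r => G r * (sin r * cos r) := by fun_prop
  have hcos : ∀ x ∈ uIcc 0 φ, 0 < cos x := fun x hx => by
    rw [uIcc_of_le hφ₀] at hx
    exact cos_pos_of_mem_Ioo ⟨by linarith [hx.1, pi_pos], by linarith [hx.2]⟩
  have hparts := intervalIntegral.integral_mul_deriv_eq_deriv_mul (a := 0) (b := φ)
    (u := fun θ => ∫ r in θ..π / 2, G r * (sin r * cos r)) (v := tan)
    (fun x _ => hcont.integral_hasDerivAt_left x _)
    (fun x hx => hasDerivAt_tan (hcos x hx).ne')
    (by apply Continuous.intervalIntegrable; fun_prop)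
    (ContinuousOn.intervalIntegrable <|
      continuousOn_const.div (by fun_prop) fun x hx => (pow_pos (hcos x hx) 2).ne')
  simp only [tan_zero, mul_zero, sub_zero, mul_one_div] at hparts
  have hneg : ∫ x in (0:ℝ)..φ, -(G x * (sin x * cos x)) * tan x
      = -∫ θ in (0:ℝ)..φ, G θ * sin θ ^ 2 := by
    rw [← intervalIntegral.integral_neg]
    refine integral_congr fun x hx => ?_
    rw [tan_eq_sin_div_cos]
    field_simp [(hcos x hx).ne']
  rw [hparts, hneg]
  ring

theorem integral_integral_comp_arccos_cos_mul_cos {G : ℝ → ℝ} (hG : Continuous G) {φ : ℝ}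
    (hφ₀ : 0 ≤ φ) (hφ : φ < π / 2) :
    ∫ θ in -φ..φ, ∫ η in (0:ℝ)..π / 2, G (arccos (cos θ * cos η)) * cos η * sin η
      = 2 * ((∫ θ in (0:ℝ)..φ, G θ * sin θ ^ 2)
        + tan φ * ∫ r in φ..π / 2, G r * (sin r * cos r)) := by
  have hcont : Continuous fun r => G r * (sin r * cos r) := by fun_prop
  set H : ℝ → ℝ := fun θ => (∫ r in |θ|..π / 2, G r * (sin r * cos r)) / cos θ ^ 2 with hHdef
  have habs : ∀ θ ∈ uIcc (-φ) φ, |θ| < π / 2 := fun θ hθ => by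
    rw [uIcc_of_le (by linarith)] at hθ
    exact abs_lt.mpr ⟨by linarith [hθ.1], by linarith [hθ.2]⟩
  have hH : IntervalIntegrable H volume (-φ) φ := by
    refine ContinuousOn.intervalIntegrable (ContinuousOn.div ?_ (by fun_prop) fun θ hθ => ?_)
    · have htail : Continuous fun a => ∫ r in a..π / 2, G r * (sin r * cos r) :=
        continuous_iff_continuousAt.mpr fun a => (hcont.integral_hasDerivAt_left a _).continuousAt
      exact (htail.comp continuous_abs).continuousOn
    · exact (pow_pos (cos_pos_of_mem_Ioo (abs_lt.mp (habs θ hθ))) 2).ne'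
  have heven : Function.Even H := fun θ => by simp only [hHdef, abs_neg, cos_neg]
  rw [integral_congr fun θ hθ => integral_comp_arccos_cos_mul_cos G (habs θ hθ),
    heven.intervalIntegral_neg_eq_two_mul hH, ← integral_primitive_div_cos_sq hG hφ₀ hφ]
  congr 1
  refine integral_congr fun θ hθ => ?_
  rw [uIcc_of_le hφ₀] at hθ
  simp only [hHdef, abs_of_nonneg hθ.1]

theorem pi_div_natCast_mem_Ioo {n : ℕ} (hn : 3 ≤ n) : π / n ∈ Ioo 0 (π / 2) :=
  ⟨div_pos pi_pos (by positivity), div_lt_div_of_pos_left pi_pos two_pos (by norm_cast)⟩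

theorem lens_average_eq {G : ℝ → ℝ} (hG : Continuous G) {n : ℕ} (hn : 3 ≤ n) :
    ((n : ℝ) ^ 2 / (2 * π ^ 2)) *
      ∫ _ in (-(π / n))..(π / n), ∫ θ₁ in (-(π / n))..(π / n), ∫ η in (0 : ℝ)..(π / 2),
          G (arccos (cos θ₁ * cos η)) * cos η * sin η
      = 2 * n / π * ((∫ θ in (0:ℝ)..π / n, G θ * sin θ ^ 2)
        + tan (π / n) * ∫ r in π / n..π / 2, G r * (sin r * cos r)) := by
  obtain ⟨hφ₀, hφ⟩ := pi_div_natCast_mem_Ioo hn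
  rw [integral_integral_comp_arccos_cos_mul_cos hG hφ₀.le hφ, intervalIntegral.integral_const,
    smul_eq_mul]
  field_simp
  ring

theorem hasSum_integral_pow_mul_div_factorial {w : ℝ → ℝ} (hw : Continuous w) (t a b : ℝ) :
    HasSum (fun k : ℕ => (∫ r in a..b, r ^ k * w r) * t ^ k / k.factorial)
      (∫ r in a..b, exp (t * r) * w r) := by
  have hexp : ∀ x : ℝ, HasSum (fun k : ℕ => x ^ k / k.factorial) (exp x) := fun x => by
    rw [exp_eq_exp_ℝ]; exact NormedSpace.expSeries_div_hasSum_exp x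
  set F : ℕ → ℝ → ℝ := fun k r => (t * r) ^ k / k.factorial * w r with hFdef
  have hF : ∀ r, HasSum (fun k => F k r) (exp (t * r) * w r) :=
    fun r => (hexp (t * r)).mul_right (w r)
  have hnorm : ∀ r, HasSum (fun k => ‖F k r‖) (exp |t * r| * |w r|) := fun r => by
    simpa [hFdef, abs_mul, abs_div, abs_pow] using (hexp |t * r|).mul_right |w r|
  have hsum := hasSum_integral_of_dominated_convergence (μ := volume) (a := a) (b := b)
    (fun k r => ‖F k r‖) (fun k => (by fun_prop : Continuous (F k)).aestronglyMeasurable)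
    (fun k => ae_of_all _ fun r _ => le_rfl) (ae_of_all _ fun r _ => (hnorm r).summable)
    (by simp_rw [(hnorm _).tsum_eq]; apply Continuous.intervalIntegrable; fun_prop)
    (ae_of_all _ fun r _ => hF r)
  have hterm : ∀ k : ℕ, ∫ r in a..b, F k r = (∫ r in a..b, r ^ k * w r) * t ^ k / k.factorial := by
    intro k
    rw [mul_div_assoc, ← intervalIntegral.integral_mul_const]
    refine integral_congr fun r _ => ?_
    simp only [hFdef, mul_pow]
    ring
  simpa only [hterm] using hsum

theorem hasDerivAt_exp_mul_mul_cos_add_sin (t p q r : ℝ) :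
    HasDerivAt (fun r => exp (t * r) * (p * cos (2 * r) + q * sin (2 * r)))
      (exp (t * r) * ((t * p + 2 * q) * cos (2 * r) + (t * q - 2 * p) * sin (2 * r))) r := by
  have he : HasDerivAt (fun r => exp (t * r)) (exp (t * r) * t) r := by
    simpa using ((hasDerivAt_id r).const_mul t).exp
  have hc : HasDerivAt (fun r => cos (2 * r)) (-sin (2 * r) * 2) r := by
    simpa using ((hasDerivAt_id r).const_mul 2).cos
  have hs : HasDerivAt (fun r => sin (2 * r)) (cos (2 * r) * 2) r := by
    simpa using ((hasDerivAt_id r).const_mul 2).sin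
  exact (he.mul ((hc.const_mul p).add (hs.const_mul q))).congr_deriv
    (by simp only [Pi.add_apply]; ring)

theorem hasDerivAt_exp_mul_primitive_sin_sq {t : ℝ} (ht : t ≠ 0) (r : ℝ) :
    HasDerivAt (fun r => exp (t * r) / (2 * t)
        - exp (t * r) * (t * cos (2 * r) + 2 * sin (2 * r)) / (2 * (t ^ 2 + 4)))
      (exp (t * r) * sin r ^ 2) r := by
  have he : HasDerivAt (fun r => exp (t * r)) (exp (t * r) * t) r := by
    simpa using ((hasDerivAt_id r).const_mul t).exp
  refine ((he.div_const (2 * t)).sub ((hasDerivAt_exp_mul_mul_cos_add_sin t t 2 r).div_const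
    (2 * (t ^ 2 + 4)))).congr_deriv ?_
  rw [cos_two_mul, cos_sq']
  field_simp
  ring

theorem hasDerivAt_exp_mul_primitive_sin_mul_cos (t r : ℝ) :
    HasDerivAt (fun r => exp (t * r) * (-2 * cos (2 * r) + t * sin (2 * r)) / (2 * (t ^ 2 + 4)))
      (exp (t * r) * (sin r * cos r)) r := by
  refine ((hasDerivAt_exp_mul_mul_cos_add_sin t (-2) t r).div_const
    (2 * (t ^ 2 + 4))).congr_deriv ?_
  rw [sin_two_mul]
  field_simp
  ring

theorem integral_exp_mul_sin_sq_add_tan_mul {t φ : ℝ} (ht : t ≠ 0) (hφ : cos φ ≠ 0) :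
    (∫ r in (0:ℝ)..φ, exp (t * r) * sin r ^ 2)
        + tan φ * ∫ r in φ..π / 2, exp (t * r) * (sin r * cos r)
      = (2 * (exp (t * φ) - 1) / t + tan φ * (exp (t * π / 2) - exp (t * φ))) / (4 + t ^ 2) := by
  rw [integral_eq_sub_of_hasDerivAt (fun r _ => hasDerivAt_exp_mul_primitive_sin_sq ht r)
      (by apply Continuous.intervalIntegrable; fun_prop),
    integral_eq_sub_of_hasDerivAt (fun r _ => hasDerivAt_exp_mul_primitive_sin_mul_cos t r)
      (by apply Continuous.intervalIntegrable; fun_prop)]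
  have hπ : 2 * (π / 2) = π := by ring
  simp only [mul_zero, exp_zero, cos_zero, sin_zero, hπ, sin_pi, cos_pi, sin_two_mul, cos_two_mul,
    tan_eq_sin_div_cos, mul_div_assoc]
  field_simp
  linear_combination -exp (t * φ) * cos φ * (8 * t ^ 2 + 2 * t ^ 4) * sin_sq_add_cos_sq φ

theorem moment_egf_eq_mgf (n : ℕ) (hn : 3 ≤ n) (t : ℝ) (ht : t ≠ 0) :
    (Summable fun k : ℕ => momentI n k * t ^ k / (k.factorial : ℝ)) ∧
      (∑' k : ℕ, momentI n k * t ^ k / (k.factorial : ℝ)) =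
        (2 * n / (Real.pi * (4 + t ^ 2))) *
          ( 2 * (Real.exp (t * Real.pi / n) - 1) / t
            + Real.tan (Real.pi / n) *
                (Real.exp (t * Real.pi / 2) - Real.exp (t * Real.pi / n)) ) := by
  obtain ⟨hφ₀, hφ⟩ := pi_div_natCast_mem_Ioo hn
  have hcos : cos (π / n) ≠ 0 := (cos_pos_of_mem_Ioo ⟨by linarith [pi_pos], hφ⟩).ne'
  have hsin_sq := hasSum_integral_pow_mul_div_factorial (w := fun r => sin r ^ 2) (by fun_prop)
    t 0 (π / n)
  have hsin_cos := hasSum_integral_pow_mul_div_factorial (w := fun r => sin r * cos r)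
    (by fun_prop) t (π / n) (π / 2)
  have hsum : HasSum (fun k : ℕ => momentI n k * t ^ k / k.factorial)
      (2 * n / π * ((∫ r in (0:ℝ)..π / n, exp (t * r) * sin r ^ 2)
        + tan (π / n) * ∫ r in π / n..π / 2, exp (t * r) * (sin r * cos r))) := by
    have hterm : (fun k : ℕ => momentI n k * t ^ k / k.factorial) = fun k : ℕ => 2 * n / π *
        ((∫ r in (0:ℝ)..π / n, r ^ k * sin r ^ 2) * t ^ k / k.factorial
          + tan (π / n) *
            ((∫ r in π / n..π / 2, r ^ k * (sin r * cos r)) * t ^ k / k.factorial)) := by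
      funext k
      rw [momentI, lens_average_eq (continuous_pow k) hn]
      ring
    rw [hterm]
    exact (hsin_sq.add (hsin_cos.mul_left _)).mul_left _
  refine ⟨hsum.summable, ?_⟩
  rw [hsum.tsum_eq, integral_exp_mul_sin_sq_add_tan_mul ht hcos, mul_div_assoc]
  field_simp
end
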